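/- The spanned parallelepiped lies in the constraint polytope for a linear connection: in the setting of the explicit Moreau data for a linear connection, with labeling ρ̃_0 < ρ̃_1 < ⋯ < ρ̃_{S−1} and r̃_n = r_{1,i_n+1} strictly smaller than the thresholds of all other edges of chain n, let B_0 = 0 and B_1, …, B_S ∈ V be the points with components √(a_e) B_j^e = ã_n · min{ρ̃_n, ρ̃_{j−1}} for every edge e of chain n. Then the parallelepiped Ω = {Σ_{j=1}^{S} τ_j (B_j − B_{j−1}) : |τ_j| ≤ 1 for all j} is contained in Π ∩ V; moreover, for every edge e of chain n other than the edge (1, i_n+1) and every point v ∈ Ω, the strict inequality √(a_e) |v_e| < r_e holds. -/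

import Mathlib

open MeasureTheory Set

noncomputable section

/-- Edges of a linear connection: chain `n` has `c n + 2` edges, edge `⟨n,0⟩`
is the edge `(1, i_n+1)` and edge `⟨n, c n + 1⟩` is the edge `(i_{n+1}, N)`. -/
def LCEdge (S : ℕ) (c : Fin S → ℕ) : Type := Σ n : Fin S, Fin (c n + 2)

instance (S : ℕ) (c : Fin S → ℕ) : Fintype (LCEdge S c) := by unfold LCEdge; infer_instance

/-- The configuration space `E = ℝ^M` of a linear connection. -/
abbrev LCSp (S : ℕ) (c : Fin S → ℕ) : Type := EuclideanSpace ℝ (LCEdge S c)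

instance (S : ℕ) (c : Fin S → ℕ) : NormedAddCommGroup (LCSp S c) := by
  unfold LCSp; infer_instance

instance (S : ℕ) (c : Fin S → ℕ) : InnerProductSpace ℝ (LCSp S c) := by
  unfold LCSp; infer_instance

/-- Diagonal rescaling map `v ↦ (w e * v e)_e`. -/
def dmulLC {S : ℕ} {c : Fin S → ℕ} (w : LCEdge S c → ℝ) :
    LCSp S c →ₗ[ℝ] LCSp S c where
  toFun v := WithLp.toLp 2 fun e => w e * v e
  map_add' x y := by
    ext e; show w e * (x e + y e) = w e * x e + w e * y e; ring
  map_smul' m x := by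
    ext e; show w e * (m * x e) = m * (w e * x e); ring

/-- The subspace `W` of deformations compatible with the geometric constraints
(at zero input): the sum of deformations along each chain is zero. -/
def WLC (S : ℕ) (c : Fin S → ℕ) : Submodule ℝ (LCSp S c) where
  carrier := {ε | ∀ n : Fin S, ∑ j : Fin (c n + 2), ε ⟨n, j⟩ = 0}
  zero_mem' := fun n => by
    have : ∀ j : Fin (c n + 2), (0 : LCSp S c) ⟨n, j⟩ = 0 := fun j => rfl
    simp [this]
  add_mem' := by
    intro a b ha hb n
    have : ∀ j : Fin (c n + 2), (a + b) (⟨n, j⟩ : LCEdge S c) = a ⟨n, j⟩ + b ⟨n, j⟩ :=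
      fun j => rfl
    simp [this, Finset.sum_add_distrib, ha n, hb n]
  smul_mem' := by
    intro m a ha n
    have : ∀ j : Fin (c n + 2), (m • a) (⟨n, j⟩ : LCEdge S c) = m * a ⟨n, j⟩ :=
      fun j => rfl
    simp [this, ← Finset.mul_sum, ha n]

/-- The subspace `V = A^{-1/2} W^⊥`. -/
def VLC {S : ℕ} {c : Fin S → ℕ} (a : LCEdge S c → ℝ) : Submodule ℝ (LCSp S c) :=
  (WLC S c)ᗮ.map (dmulLC fun e => (Real.sqrt (a e))⁻¹)

/-- The box `C` of admissible stresses. -/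
def CboxLC {S : ℕ} {c : Fin S → ℕ} (r : LCEdge S c → ℝ) : Set (LCSp S c) :=
  {σ | ∀ e, |σ e| ≤ r e}

/-- The rescaled polytope `Π = A^{-1/2} C`. -/
def PiLC {S : ℕ} {c : Fin S → ℕ} (a r : LCEdge S c → ℝ) : Set (LCSp S c) :=
  (dmulLC fun e => (Real.sqrt (a e))⁻¹) '' CboxLC r

/-- The vector `k₀`: component `1` on the edges `(i_n, N)` (the last edge of
each chain), `0` elsewhere. -/
def k0LC (S : ℕ) (c : Fin S → ℕ) : LCSp S c := WithLp.toLp 2 fun e : LCEdge S c =>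
  if (e.2 : ℕ) = c e.1 + 1 then (1 : ℝ) else 0

/-- Effective stiffness `ã_n` of chain `n`. -/
def atilLC {S : ℕ} {c : Fin S → ℕ} (a : LCEdge S c → ℝ) (n : Fin S) : ℝ :=
  (∑ j : Fin (c n + 2), (a ⟨n, j⟩)⁻¹)⁻¹

/-- Effective threshold `r̃_n` of chain `n`. -/
def rtilLC {S : ℕ} {c : Fin S → ℕ} (r : LCEdge S c → ℝ) (n : Fin S) : ℝ :=
  Finset.univ.inf' ⟨⟨0, by omega⟩, Finset.mem_univ _⟩ fun j : Fin (c n + 2) => r ⟨n, j⟩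

/-- The facet `Π_n` of `Π` on which the first edge of chain `n` is at its
positive threshold. -/
def PfaceLC {S : ℕ} {c : Fin S → ℕ} (a r : LCEdge S c → ℝ) (n : Fin S) :
    Set (LCSp S c) :=
  {v ∈ PiLC a r | Real.sqrt (a ⟨n, 0⟩) * v ⟨n, 0⟩ = r ⟨n, 0⟩}

/-- The face `F_j = V ∩ Π_1 ∩ ⋯ ∩ Π_j` of the polytope `Π ∩ V`. -/
def FfaceLC {S : ℕ} {c : Fin S → ℕ} (a r : LCEdge S c → ℝ) (j : ℕ) :
    Set (LCSp S c) :=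
  ↑(VLC a) ∩ PiLC a r ∩ ⋂ (n : Fin S) (_ : (n : ℕ) < j), PfaceLC a r n


/-!
On every edge `e` of chain `n`, `√a_e B_j^e = ã_n min(ρ̃_n, ρ̃_{j-1})` depends only on `n`, so each
`B_j` lies in `V`; and it is nondecreasing in `j` because the `ρ̃` are increasing. For `|τ_j| ≤ 1`
the coordinate `√a_e v_e` of `v = ∑ τ_j (B_j - B_{j-1})` is therefore bounded by the telescoped
sum `√a_e B_S^e ≤ ã_n ρ̃_n = r̃_n`, and `r̃_n = r_{1,i_n+1}` is below every other threshold of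
the chain.
-/

theorem Fin.sum_succ_sub_castSucc {M : Type*} [AddCommGroup M] {n : ℕ} (f : Fin (n + 1) → M) :
    ∑ i : Fin n, (f i.succ - f i.castSucc) = f (Fin.last n) - f 0 := by
  induction n with
  | zero => simp
  | succ n ih =>
    rw [Fin.sum_univ_castSucc]
    simp only [Fin.succ_castSucc]
    rw [ih (fun i => f i.castSucc), Fin.castSucc_zero, Fin.succ_last]
    abel

theorem abs_sum_mul_sub_le_of_monotone {n : ℕ} {f : Fin (n + 1) → ℝ} (hf : Monotone f)
    {τ : Fin n → ℝ} (hτ : ∀ i, |τ i| ≤ 1) :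
    |∑ i, τ i * (f i.succ - f i.castSucc)| ≤ f (Fin.last n) - f 0 := by
  have hstep : ∀ i : Fin n, 0 ≤ f i.succ - f i.castSucc :=
    fun i => sub_nonneg.2 (Fin.monotone_iff_le_succ.1 hf i)
  calc |∑ i, τ i * (f i.succ - f i.castSucc)|
      ≤ ∑ i, |τ i| * (f i.succ - f i.castSucc) := by
        refine (Finset.abs_sum_le_sum_abs _ _).trans_eq (Finset.sum_congr rfl fun i _ => ?_)
        rw [abs_mul, abs_of_nonneg (hstep i)]
    _ ≤ ∑ i, (f i.succ - f i.castSucc) :=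
        Finset.sum_le_sum fun i _ => mul_le_of_le_one_left (hstep i) (hτ i)
    _ = f (Fin.last n) - f 0 := Fin.sum_succ_sub_castSucc f

section LinearConnection

variable {S : ℕ} {c : Fin S → ℕ} {a r : LCEdge S c → ℝ}

theorem atilLC_pos (ha : ∀ e, 0 < a e) (n : Fin S) : 0 < atilLC a n :=
  inv_pos.2 <| Finset.sum_pos (fun _ _ => inv_pos.2 (ha _)) Finset.univ_nonempty

theorem rtilLC_pos (hr : ∀ e, 0 < r e) (n : Fin S) : 0 < rtilLC r n :=
  (Finset.lt_inf'_iff _).2 fun _ _ => hr _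

theorem rtilLC_le (r : LCEdge S c → ℝ) (e : LCEdge S c) : rtilLC r e.1 ≤ r e :=
  Finset.inf'_le _ (Finset.mem_univ e.2)

theorem sum_LCEdge {M : Type*} [AddCommMonoid M] (f : LCEdge S c → M) :
    ∑ e, f e = ∑ n, ∑ j, f ⟨n, j⟩ :=
  Fintype.sum_sigma f

theorem chainConst_mem_orthogonal_WLC (g : Fin S → ℝ) :
    WithLp.toLp 2 (fun e : LCEdge S c => g e.1) ∈ (WLC S c)ᗮ := by
  rw [Submodule.mem_orthogonal]
  intro u hu
  have : inner ℝ u (WithLp.toLp 2 fun e : LCEdge S c => g e.1) = ∑ n, g n * ∑ j, u ⟨n, j⟩ := by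
    simp only [PiLp.inner_apply, sum_LCEdge, Finset.mul_sum]
    simp
  simp only [this, hu _, mul_zero, Finset.sum_const_zero]

theorem mem_VLC_of_sqrt_mul_apply_eq (ha : ∀ e, 0 < a e) {v : LCSp S c} (g : Fin S → ℝ)
    (hv : ∀ e, Real.sqrt (a e) * v e = g e.1) : v ∈ VLC a := by
  refine ⟨_, chainConst_mem_orthogonal_WLC g, ?_⟩
  ext e
  show (Real.sqrt (a e))⁻¹ * g e.1 = v e
  rw [← hv, inv_mul_cancel_left₀ (Real.sqrt_pos.2 (ha e)).ne']

theorem mem_PiLC_of_sqrt_mul_abs_le (ha : ∀ e, 0 < a e) {v : LCSp S c}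
    (hv : ∀ e, Real.sqrt (a e) * |v e| ≤ r e) : v ∈ PiLC a r := by
  refine ⟨WithLp.toLp 2 fun e => Real.sqrt (a e) * v e, fun e => ?_, ?_⟩
  · show |Real.sqrt (a e) * v e| ≤ r e
    rw [abs_mul, abs_of_nonneg (Real.sqrt_nonneg _)]
    exact hv e
  · ext e
    show (Real.sqrt (a e))⁻¹ * (Real.sqrt (a e) * v e) = v e
    rw [inv_mul_cancel_left₀ (Real.sqrt_pos.2 (ha e)).ne']

def loadLC (a r : LCEdge S c → ℝ) (n : Fin S) (j : Fin (S + 1)) : ℝ :=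
  if h : (j : ℕ) = 0 then 0 else
    atilLC a n * min (rtilLC r n / atilLC a n)
      (rtilLC r ⟨(j : ℕ) - 1, by omega⟩ / atilLC a ⟨(j : ℕ) - 1, by omega⟩)

theorem loadLC_monotone (ha : ∀ e, 0 < a e) (hr : ∀ e, 0 < r e)
    (hρ : Monotone fun n => rtilLC r n / atilLC a n) (n : Fin S) : Monotone (loadLC a r n) := by
  have hρpos : ∀ m, 0 < rtilLC r m / atilLC a m :=
    fun m => div_pos (rtilLC_pos hr m) (atilLC_pos ha m)
  intro i j hij
  have hij' : (i : ℕ) ≤ j := hij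
  unfold loadLC
  split_ifs with hi hj hj
  · rfl
  · exact mul_nonneg (atilLC_pos ha n).le (le_min (hρpos _).le (hρpos _).le)
  · omega
  · exact mul_le_mul_of_nonneg_left (min_le_min_left _ (hρ (Fin.mk_le_mk.2 (by omega))))
      (atilLC_pos ha n).le

theorem loadLC_le_rtilLC (ha : ∀ e, 0 < a e) (hr : ∀ e, 0 < r e) (n : Fin S) (j : Fin (S + 1)) :
    loadLC a r n j ≤ rtilLC r n := by
  unfold loadLC
  split_ifs
  · exact (rtilLC_pos hr n).le
  · calc _ ≤ atilLC a n * (rtilLC r n / atilLC a n) :=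
          mul_le_mul_of_nonneg_left (min_le_left _ _) (atilLC_pos ha n).le
      _ = rtilLC r n := mul_div_cancel₀ _ (atilLC_pos ha n).ne'

@[simp]
theorem loadLC_zero (a r : LCEdge S c → ℝ) (n : Fin S) : loadLC a r n 0 = 0 := by
  simp [loadLC]

theorem sqrt_mul_apply_eq_loadLC (hS : 1 ≤ S) {B : Fin (S + 1) → LCSp S c} (hB0 : B 0 = 0)
    (hB : ∀ j : Fin (S + 1), 1 ≤ (j : ℕ) → ∀ e : LCEdge S c,
      Real.sqrt (a e) * B j e =
        atilLC a e.1 * min (rtilLC r e.1 / atilLC a e.1)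
          (rtilLC r ⟨(j : ℕ) - 1, by omega⟩ /
            atilLC a ⟨(j : ℕ) - 1, by omega⟩))
    (j : Fin (S + 1)) (e : LCEdge S c) : Real.sqrt (a e) * B j e = loadLC a r e.1 j := by
  unfold loadLC
  split_ifs with hj
  · obtain rfl : j = 0 := Fin.ext hj
    simp [hB0]
  · exact hB j (by omega) e

end LinearConnection

/-- The parallelepiped `Ω` spanned by the links of the loading polyline of a
linear connection is contained in the constraint polytope `Π ∩ V`; moreover on
all edges other than the first edge of each chain the constraint is strict. -/
theorem linear_connection_omega_in_polytope
    (S : ℕ) (hS : 1 ≤ S) (c : Fin S → ℕ)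
    (a r : LCEdge S c → ℝ) (ha : ∀ e, 0 < a e) (hr : ∀ e, 0 < r e)
    (hord : ∀ n m : Fin S, n < m → rtilLC r n / atilLC a n < rtilLC r m / atilLC a m)
    (hmin : ∀ n : Fin S, rtilLC r n = r ⟨n, 0⟩ ∧
      ∀ j : Fin (c n + 2), j ≠ 0 → r ⟨n, 0⟩ < r ⟨n, j⟩)
    (B : Fin (S + 1) → LCSp S c) (hB0 : B 0 = 0)
    (hB : ∀ j : Fin (S + 1), 1 ≤ (j : ℕ) → ∀ e : LCEdge S c,
      Real.sqrt (a e) * B j e =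
        atilLC a e.1 * min (rtilLC r e.1 / atilLC a e.1)
          (rtilLC r ⟨(j : ℕ) - 1, by have := j.isLt; omega⟩ /
            atilLC a ⟨(j : ℕ) - 1, by have := j.isLt; omega⟩)) :
    ∀ τ : Fin S → ℝ, (∀ j, |τ j| ≤ 1) →
      (∑ j : Fin S, τ j • (B j.succ - B j.castSucc)) ∈ PiLC a r ∩ ↑(VLC a) ∧
      ∀ e : LCEdge S c, (e.2 : ℕ) ≠ 0 →
        Real.sqrt (a e) * |(∑ j : Fin S, τ j • (B j.succ - B j.castSucc)) e| < r e := by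
  intro τ hτ
  set v := ∑ j : Fin S, τ j • (B j.succ - B j.castSucc)
  have hload := sqrt_mul_apply_eq_loadLC hS hB0 hB
  have hcoord : ∀ e, Real.sqrt (a e) * v e =
      ∑ j, τ j * (loadLC a r e.1 j.succ - loadLC a r e.1 j.castSucc) := by
    intro e
    simp only [v, ← hload, Finset.mul_sum, WithLp.ofLp_sum, WithLp.ofLp_smul, WithLp.ofLp_sub,
      Finset.sum_apply, Pi.smul_apply, Pi.sub_apply, smul_eq_mul]
    exact Finset.sum_congr rfl fun j _ => by ring
  have hbound : ∀ e, Real.sqrt (a e) * |v e| ≤ rtilLC r e.1 := fun e =>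
    calc Real.sqrt (a e) * |v e| = |Real.sqrt (a e) * v e| := by
          rw [abs_mul, abs_of_nonneg (Real.sqrt_nonneg _)]
      _ ≤ loadLC a r e.1 (Fin.last S) - loadLC a r e.1 0 := by
          rw [hcoord]
          exact abs_sum_mul_sub_le_of_monotone
            (loadLC_monotone ha hr (StrictMono.monotone fun n m h => hord n m h) e.1) hτ
      _ ≤ rtilLC r e.1 := by simpa using loadLC_le_rtilLC ha hr e.1 (Fin.last S)
  have hBV : ∀ j, B j ∈ VLC a :=
    fun j => mem_VLC_of_sqrt_mul_apply_eq ha (fun n => loadLC a r n j) (hload j)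
  refine ⟨⟨mem_PiLC_of_sqrt_mul_abs_le ha fun e => (hbound e).trans (rtilLC_le r e),
    Submodule.sum_mem _ fun j _ => Submodule.smul_mem _ _ (sub_mem (hBV _) (hBV _))⟩,
    fun e he => ?_⟩
  calc Real.sqrt (a e) * |v e| ≤ rtilLC r e.1 := hbound e
    _ = r ⟨e.1, 0⟩ := (hmin e.1).1
    _ < r e := (hmin e.1).2 e.2 fun h => he (by rw [h]; rfl)

end
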